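/- For every (ξ,μ) ∈ 𝒫 = (1.18,1.19) × (−10,−9), the planar map g_{ξ,μ} sends each of the parallelograms 𝙰_{ξ,μ} and 𝙱_{ξ,μ} exactly onto the full rectangle: g_{ξ,μ}(𝙰_{ξ,μ}) = g_{ξ,μ}(𝙱_{ξ,μ}) = [−4,4] × [−40,22]. -/

import Mathlib

open Set

/-- The planar endomorphism `g (y,z) = (μ + y², ξ z + y)`. -/
noncomputable def gPlanar (ξ μ : ℝ) : ℝ × ℝ → ℝ × ℝ :=
  fun p => (μ + p.1 ^ 2, ξ * p.2 + p.1)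

noncomputable def am (μ : ℝ) : ℝ := -Real.sqrt (4 - μ)
noncomputable def bm (μ : ℝ) : ℝ := -Real.sqrt (-4 - μ)
noncomputable def cm (μ : ℝ) : ℝ := Real.sqrt (-4 - μ)
noncomputable def dm (μ : ℝ) : ℝ := Real.sqrt (4 - μ)

noncomputable def parA (ξ μ : ℝ) : Set (ℝ × ℝ) :=
  {p | p.1 ∈ Icc (am μ) (bm μ) ∧ (-40 - p.1) / ξ ≤ p.2 ∧ p.2 ≤ (22 - p.1) / ξ}

noncomputable def parB (ξ μ : ℝ) : Set (ℝ × ℝ) :=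
  {p | p.1 ∈ Icc (cm μ) (dm μ) ∧ (-40 - p.1) / ξ ≤ p.2 ∧ p.2 ≤ (22 - p.1) / ξ}

/-! The shear `(y, z) ↦ (y, ξ z + y)` straightens the parallelograms into rectangles, and
`g` is this shear followed by `y ↦ μ + y²` on the first coordinate. The latter maps each of
`[-√(4-μ), -√(-4-μ)]` and `[√(-4-μ), √(4-μ)]` monotonically onto `[-4, 4]`. -/

def shear (ξ : ℝ) (p : ℝ × ℝ) : ℝ × ℝ := (p.1, ξ * p.2 + p.1)

lemma gPlanar_eq_prodMap_comp_shear (ξ μ : ℝ) :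
    gPlanar ξ μ = Prod.map (fun y => μ + y ^ 2) id ∘ shear ξ :=
  rfl

lemma shear_surjective {ξ : ℝ} (hξ : ξ ≠ 0) : Function.Surjective (shear ξ) := by
  rintro ⟨y, w⟩
  refine ⟨(y, (w - y) / ξ), ?_⟩
  simp only [shear, Prod.mk.injEq, true_and]
  field_simp
  ring

lemma setOf_between_lines_eq_preimage_shear {ξ : ℝ} (hξ : 0 < ξ) (S : Set ℝ) (c d : ℝ) :
    {p : ℝ × ℝ | p.1 ∈ S ∧ (c - p.1) / ξ ≤ p.2 ∧ p.2 ≤ (d - p.1) / ξ} =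
      shear ξ ⁻¹' (S ×ˢ Icc c d) := by
  ext ⟨y, z⟩
  simp only [mem_ofPred_eq, mem_preimage, shear, mem_prod, mem_Icc, div_le_iff₀ hξ,
    le_div_iff₀ hξ]
  constructor <;> rintro ⟨hy, hc, hd⟩ <;> exact ⟨hy, by linarith, by linarith⟩

lemma image_gPlanar_setOf_between_lines {ξ : ℝ} (hξ : 0 < ξ) (μ : ℝ) (S : Set ℝ) (c d : ℝ) :
    gPlanar ξ μ '' {p : ℝ × ℝ | p.1 ∈ S ∧ (c - p.1) / ξ ≤ p.2 ∧ p.2 ≤ (d - p.1) / ξ} =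
      ((fun y => μ + y ^ 2) '' S) ×ˢ Icc c d := by
  rw [setOf_between_lines_eq_preimage_shear hξ, gPlanar_eq_prodMap_comp_shear, image_comp,
    image_preimage_eq _ (shear_surjective hξ.ne'), prodMap_image_prod, image_id]

lemma image_sq_Icc_sqrt {a b : ℝ} (ha : 0 ≤ a) (hb : 0 ≤ b) :
    (· ^ 2) '' Icc (√a) (√b) = Icc a b := by
  ext u
  constructor
  · rintro ⟨y, ⟨hay, hyb⟩, rfl⟩
    have hy : 0 ≤ y := (Real.sqrt_nonneg a).trans hay
    refine ⟨?_, ?_⟩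
    · simpa only [Real.sq_sqrt ha] using pow_le_pow_left₀ (Real.sqrt_nonneg a) hay 2
    · simpa only [Real.sq_sqrt hb] using pow_le_pow_left₀ hy hyb 2
  · rintro ⟨hau, hub⟩
    exact ⟨√u, ⟨Real.sqrt_le_sqrt hau, Real.sqrt_le_sqrt hub⟩, Real.sq_sqrt (ha.trans hau)⟩

lemma image_sq_Icc_neg_sqrt {a b : ℝ} (ha : 0 ≤ a) (hb : 0 ≤ b) :
    (· ^ 2) '' Icc (-√b) (-√a) = Icc a b := by
  rw [← neg_Icc, ← image_neg_eq_neg, ← image_comp, ← image_sq_Icc_sqrt ha hb]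
  simp only [Function.comp_def, neg_sq]

lemma image_add_sq_eq_Icc (μ : ℝ) {I : Set ℝ}
    (hI : (· ^ 2) '' I = Icc (-4 - μ) (4 - μ)) :
    (fun y => μ + y ^ 2) '' I = Icc (-4) 4 := by
  rw [← image_image (fun x => μ + x) (· ^ 2), hI, image_const_add_Icc]
  ring_nf

theorem parallelograms_map_onto_rectangle (ξ μ : ℝ)
    (hξ : ξ ∈ Ioo (1.18 : ℝ) 1.19) (hμ : μ ∈ Ioo (-10 : ℝ) (-9)) :
    gPlanar ξ μ '' parA ξ μ = Icc (-4 : ℝ) 4 ×ˢ Icc (-40 : ℝ) 22 ∧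
    gPlanar ξ μ '' parB ξ μ = Icc (-4 : ℝ) 4 ×ˢ Icc (-40 : ℝ) 22 := by
  have hξ0 : 0 < ξ := by linarith [hξ.1]
  have hlow : (0 : ℝ) ≤ -4 - μ := by linarith [hμ.2]
  have hhigh : (0 : ℝ) ≤ 4 - μ := by linarith [hμ.2]
  rw [parA, parB, image_gPlanar_setOf_between_lines hξ0, image_gPlanar_setOf_between_lines hξ0,
    am, bm, cm, dm, image_add_sq_eq_Icc μ (image_sq_Icc_neg_sqrt hlow hhigh),
    image_add_sq_eq_Icc μ (image_sq_Icc_sqrt hlow hhigh)]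
  exact ⟨rfl, rfl⟩
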